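/- arXiv:1210.3696 — 3 statements merged into one kernel-verified Lean document; each statement's English description precedes it below -/
import Mathlib

section
/- For ordinals ξ and ζ with 0 < ζ ≤ ξ and ω ≤ ξ, the Banach space C₀([0, ξ·ζ]) is isomorphic (as a Banach space, i.e., linearly homeomorphic) to the direct sum C₀([0, ζ]) ⊕ c₀(ζ, C₀([0, ξ])). -/
set_option synthInstance.maxHeartbeats 1000000
set_option maxHeartbeats 1000000

noncomputable section

open Ordinal Set Metric

/-- The compact ordinal interval `[0, α]`. -/
instance ordIicCompact (α : Ordinal) : CompactSpace (Set.Iic α) := by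
  rw [← isCompact_iff_compactSpace, ← Set.Icc_bot]
  exact isCompact_Icc

/-- `C₀([0, α])`: continuous functions on `[0, α]` vanishing at `α`, as a submodule. -/
def CzeroSub (α : Ordinal) : Submodule ℝ C(Set.Iic α, ℝ) where
  carrier := {f | f ⟨α, Set.self_mem_Iic⟩ = 0}
  add_mem' := by intro f g hf hg; simp only [Set.mem_setOf_eq] at *; simp [hf, hg]
  zero_mem' := rfl
  smul_mem' := by intro c f hf; simp only [Set.mem_setOf_eq] at *; simp [hf]

/-- The Banach space `C₀([0, α])`. -/
abbrev Czero (α : Ordinal) := ↥(CzeroSub α)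

/-- `c₀(S, X)` as a submodule of `ℓ∞(S, X)`. -/
def czeroSub (S : Type*) (X : Type*) [NormedAddCommGroup X] [NormedSpace ℝ X] :
    Submodule ℝ (lp (fun _ : S => X) ⊤) where
  carrier := {f | ∀ ε : ℝ, 0 < ε → {s : S | ε < ‖(f : ∀ _ : S, X) s‖}.Finite}
  add_mem' := by
    intro f g hf hg ε hε
    refine ((hf (ε/2) (by linarith)).union (hg (ε/2) (by linarith))).subset ?_
    intro s hs
    simp only [Set.mem_setOf_eq, Set.mem_union] at *
    by_contra hc
    push_neg at hc
    have := norm_add_le ((f : ∀ _ : S, X) s) ((g : ∀ _ : S, X) s)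
    simp only [lp.coeFn_add, Pi.add_apply] at hs
    linarith [hc.1, hc.2]
  zero_mem' := by
    intro ε hε
    convert Set.finite_empty
    ext s; simp [hε.not_gt, le_of_lt hε]
  smul_mem' := by
    intro c f hf ε hε
    rcases eq_or_ne c 0 with rfl | hc
    · convert Set.finite_empty
      ext s; simp [hε.not_gt, le_of_lt hε]
    · refine (hf (ε / ‖c‖) (div_pos hε (norm_pos_iff.2 hc))).subset ?_
      intro s hs
      simp only [Set.mem_setOf_eq, lp.coeFn_smul, Pi.smul_apply, norm_smul] at *
      exact (div_lt_iff₀ (norm_pos_iff.2 hc)).2 (by rw [mul_comm]; exact hs)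

/-- The Banach space `c₀(S, X)`. -/
abbrev czero (S : Type*) (X : Type*) [NormedAddCommGroup X] [NormedSpace ℝ X] :=
  ↥(czeroSub S X)

instance (α : Ordinal) : NormedAddCommGroup (Czero α) := inferInstance
instance (α : Ordinal) : NormedSpace ℝ (Czero α) := inferInstance
instance (S : Type*) (X : Type*) [NormedAddCommGroup X] [NormedSpace ℝ X] :
    NormedAddCommGroup (czero S X) := inferInstance
instance (S : Type*) (X : Type*) [NormedAddCommGroup X] [NormedSpace ℝ X] :
    NormedSpace ℝ (czero S X) := inferInstance

section Szlenk

variable (X : Type*) [NormedAddCommGroup X] [NormedSpace ℝ X]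

open NormedSpace

/-- A set of functionals is weak-star open if it is open in the weak-star topology. -/
def IsWstarOpen (V : Set (StrongDual ℝ X)) : Prop :=
  IsOpen (StrongDual.toWeakDual '' V : Set (WeakDual ℝ X))

/-- The ε-Szlenk derivation. -/
def szDeriv (ε : ℝ) (B : Set (StrongDual ℝ X)) : Set (StrongDual ℝ X) :=
  {x ∈ B | ∀ V : Set (StrongDual ℝ X), IsWstarOpen X V → x ∈ V → ε < Metric.diam (B ∩ V)}

/-- Transfinite iterates of the ε-Szlenk derivation. -/
def szIter (ε : ℝ) (B : Set (StrongDual ℝ X)) (β : Ordinal.{0}) : Set (StrongDual ℝ X) :=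
  Ordinal.limitRecOn β B (fun _ ih => szDeriv X ε ih)
    (fun β _ ih => ⋂ (σ : Ordinal.{0}) (h : σ < β), ih σ h)

/-- The ε-Szlenk index `Sz(X, ε)`. -/
def SzE (ε : ℝ) : Ordinal :=
  sInf {β | szIter X ε (Metric.closedBall (0 : StrongDual ℝ X) 1) β = ∅}

/-- `X` has a (well-defined) Szlenk index. -/
def SzDefined : Prop :=
  ∀ ε : ℝ, 0 < ε → ∃ β : Ordinal, szIter X ε (Metric.closedBall (0 : StrongDual ℝ X) 1) β = ∅

/-- The Szlenk index `Sz(X)`. -/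
def Sz : Ordinal := ⨆ ε : {ε : ℝ // 0 < ε}, SzE X ε

/-- A weak-star slice. -/
def wstarSlice (x : X) (t : ℝ) : Set (StrongDual ℝ X) := {x' | t < x' x}

/-- The ε-dentability derivation. -/
def dzDeriv (ε : ℝ) (B : Set (StrongDual ℝ X)) : Set (StrongDual ℝ X) :=
  {x' ∈ B | ∀ (x : X) (t : ℝ), x' ∈ wstarSlice X x t → ε < Metric.diam (B ∩ wstarSlice X x t)}

/-- Transfinite iterates of the ε-dentability derivation. -/
def dzIter (ε : ℝ) (B : Set (StrongDual ℝ X)) (β : Ordinal.{0}) : Set (StrongDual ℝ X) :=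
  Ordinal.limitRecOn β B (fun _ ih => dzDeriv X ε ih)
    (fun β _ ih => ⋂ (σ : Ordinal.{0}) (h : σ < β), ih σ h)

/-- The ε-w*-dentability index `Dz(X, ε)`. -/
def DzE (ε : ℝ) : Ordinal :=
  sInf {β | dzIter X ε (Metric.closedBall (0 : StrongDual ℝ X) 1) β = ∅}

/-- The w*-dentability index `Dz(X)`. -/
def Dz : Ordinal := ⨆ ε : {ε : ℝ // 0 < ε}, DzE X ε

end Szlenk

/-!
`[0, ξ * ζ]` is the disjoint union of the multiples `ξ * q` (`q ≤ ζ` zero or a limit) and the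
blocks `(ξ * q, ξ * (q + 1)] = {ξ * q + 1 + r | r ≤ ξ}`, `q < ζ` (this uses `1 + ξ = ξ`, i.e.
`ω ≤ ξ`). Each block is clopen and homeomorphic to `[0, ξ]`, and `γ ↦ ⌈γ / ξ⌉` is continuous.
The isomorphism sends `f` to `q ↦ f (ξ * q)` together with the blocks of
`f - f (ξ * ⌈· / ξ⌉)`. These blocks form a `c₀` family by compactness: the set where the defect
is at least `ε` is compact and covered by the disjoint open blocks. Conversely, a `c₀` family
glued along the blocks is a uniform limit of finite sums of continuous functions.
-/

open Function Topology

theorem ContinuousMap.norm_comp_le {X Y E : Type*} [TopologicalSpace X] [CompactSpace X]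
    [TopologicalSpace Y] [CompactSpace Y] [NormedAddCommGroup E] (f : C(Y, E)) (g : C(X, Y)) :
    ‖f.comp g‖ ≤ ‖f‖ :=
  (ContinuousMap.norm_le _ (norm_nonneg f)).2 fun x => f.norm_coe_le_norm (g x)

theorem ContinuousMap.exists_lt_norm_apply {Y E : Type*} [TopologicalSpace Y] [CompactSpace Y]
    [NormedAddCommGroup E] {g : C(Y, E)} {ε : ℝ} (hε : 0 ≤ ε) (hg : ε < ‖g‖) :
    ∃ y, ε < ‖g y‖ := by
  by_contra! H
  exact hg.not_ge ((ContinuousMap.norm_le g hε).2 H)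

theorem continuous_extend_zero_of_isClosedEmbedding {X Y E : Type*} [TopologicalSpace X]
    [TopologicalSpace Y] [TopologicalSpace E] [Zero E] {e : Y → X} {h : Y → E}
    (he : IsClosedEmbedding e) (hopen : IsOpen (range e)) (hh : Continuous h) :
    Continuous (extend e h 0) := by
  refine continuous_iff_continuousAt.2 fun x => ?_
  by_cases hx : x ∈ range e
  · obtain ⟨y, rfl⟩ := hx
    rw [← IsOpenEmbedding.continuousAt_iff ⟨he.isEmbedding, hopen⟩, extend_comp he.injective]
    exact hh.continuousAt
  · refine (continuousAt_const (y := 0)).congr ?_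
    filter_upwards [he.isClosed_range.isOpen_compl.mem_nhds hx] with x' hx'
    exact (extend_apply' h (0 : X → E) x' hx').symm

section GlueBlocks

variable {X Y ι E : Type*} [NormedAddCommGroup E] {e : ι → Y → X}

/-- For injective `e i` with disjoint ranges: the function equal to `h i ∘ (e i)⁻¹` on each block
`range (e i)` and to `0` off the blocks. -/
def glueBlocks (e : ι → Y → X) (h : ι → Y → E) (x : X) : E :=
  ∑ᶠ i, extend (e i) (h i) 0 x

theorem glueBlocks_eq_zero (h : ι → Y → E) {x : X} (hx : ∀ i, x ∉ range (e i)) :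
    glueBlocks e h x = 0 :=
  finsum_eq_zero_of_forall_eq_zero fun i => extend_apply' _ _ _ (hx i)

variable (hdisj : Pairwise (Disjoint on fun i => range (e i)))
include hdisj

theorem extend_zero_apply_of_ne (h : ι → Y → E) {i j : ι} (hij : j ≠ i) (y : Y) :
    extend (e j) (h j) 0 (e i y) = 0 :=
  extend_apply' _ _ _ fun ⟨y', hy'⟩ => disjoint_left.1 (hdisj hij) ⟨y', hy'⟩ ⟨y, rfl⟩

theorem finite_setOf_lt_norm_comp [TopologicalSpace X] [CompactSpace X]
    (hopen : ∀ i, IsOpen (range (e i))) {D : X → E} (hD : Continuous D)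
    (hsupp : support D ⊆ ⋃ i, range (e i)) {ε : ℝ} (hε : 0 < ε) :
    {i | ∃ y, ε < ‖D (e i y)‖}.Finite := by
  have hK : IsCompact {x | ε ≤ ‖D x‖} := (isClosed_le continuous_const hD.norm).isCompact
  obtain ⟨t, ht⟩ := hK.elim_finite_subcover (fun i => range (e i)) hopen fun x hx =>
    hsupp (norm_pos_iff.1 (hε.trans_le hx))
  refine t.finite_toSet.subset fun i ⟨y, hy⟩ => ?_
  obtain ⟨j, hj, hyj⟩ := mem_iUnion₂.1 (ht hy.le)
  by_contra hi
  exact disjoint_left.1 (hdisj (ne_of_mem_of_not_mem hj hi)) hyj ⟨y, rfl⟩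

variable (hinj : ∀ i, Injective (e i))
include hinj

theorem glueBlocks_apply (h : ι → Y → E) (i : ι) (y : Y) : glueBlocks e h (e i y) = h i y :=
  (finsum_eq_single _ i fun _ hj => extend_zero_apply_of_ne hdisj h hj y).trans
    ((hinj i).extend_apply _ _ _)

theorem glueBlocks_comp {D : X → E} (hD : support D ⊆ ⋃ i, range (e i)) :
    glueBlocks e (fun i => D ∘ e i) = D := by
  funext x
  by_cases hx : ∃ i, x ∈ range (e i)
  · obtain ⟨i, y, rfl⟩ := hx
    exact glueBlocks_apply hdisj hinj _ i y
  · rw [glueBlocks_eq_zero _ fun i hi => hx ⟨i, hi⟩, eq_comm, ← notMem_support]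
    exact fun hD' => hx (mem_iUnion.1 (hD hD'))

theorem norm_glueBlocks_sub_sum_le (h : ι → Y → E) (s : Finset ι) {ε : ℝ} (hε : 0 ≤ ε)
    (hs : ∀ i ∉ s, ∀ y, ‖h i y‖ ≤ ε) (x : X) :
    ‖glueBlocks e h x - ∑ i ∈ s, extend (e i) (h i) 0 x‖ ≤ ε := by
  by_cases hx : ∃ i, x ∈ range (e i)
  · obtain ⟨i, y, rfl⟩ := hx
    rw [glueBlocks_apply hdisj hinj]
    by_cases hi : i ∈ s
    · rw [Finset.sum_eq_single_of_mem i hi fun j _ hj => extend_zero_apply_of_ne hdisj h hj y,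
        (hinj i).extend_apply, _root_.sub_self, norm_zero]
      exact hε
    · rw [Finset.sum_eq_zero fun j hj =>
        extend_zero_apply_of_ne hdisj h (ne_of_mem_of_not_mem hj hi) y, _root_.sub_zero]
      exact hs i hi y
  · have hx' : ∀ i, x ∉ range (e i) := fun i hi => hx ⟨i, hi⟩
    simp [glueBlocks_eq_zero h hx', extend_apply' _ _ _ (hx' _), hε]

theorem norm_glueBlocks_le (h : ι → Y → E) {C : ℝ} (hC : 0 ≤ C) (hh : ∀ i y, ‖h i y‖ ≤ C)
    (x : X) : ‖glueBlocks e h x‖ ≤ C := by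
  simpa using norm_glueBlocks_sub_sum_le hdisj hinj h ∅ hC (fun i _ => hh i) x

end GlueBlocks

theorem continuous_glueBlocks {X Y ι E : Type*} [TopologicalSpace X] [TopologicalSpace Y]
    [NormedAddCommGroup E] {e : ι → Y → X} (he : ∀ i, IsClosedEmbedding (e i))
    (hopen : ∀ i, IsOpen (range (e i))) (hdisj : Pairwise (Disjoint on fun i => range (e i)))
    {h : ι → Y → E} (hh : ∀ i, Continuous (h i))
    (hfin : ∀ ε > 0, {i | ∃ y, ε < ‖h i y‖}.Finite) : Continuous (glueBlocks e h) := by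
  refine continuous_of_uniform_approx_of_continuous fun u hu => ?_
  obtain ⟨ε, hε, hεu⟩ := Metric.mem_uniformity_dist.1 hu
  have hs := hfin (ε / 2) (half_pos hε)
  refine ⟨fun x => ∑ i ∈ hs.toFinset, extend (e i) (h i) 0 x,
    continuous_finsetSum _ fun i _ =>
      continuous_extend_zero_of_isClosedEmbedding (he i) (hopen i) (hh i),
    fun x => hεu ?_⟩
  rw [dist_eq_norm]
  refine (norm_glueBlocks_sub_sum_le hdisj (fun i => (he i).injective) h _ (half_pos hε).le
    (fun i hi y => ?_) x).trans_lt (half_lt_self hε)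
  exact not_lt.1 fun hlt => hi (hs.mem_toFinset.2 ⟨y, hlt⟩)

namespace Ordinal

def ceilDiv (γ ξ : Ordinal) : Ordinal := sInf {q | γ ≤ ξ * q}

variable {γ ξ q r : Ordinal}

theorem ne_zero_of_omega0_le (hξ : ω ≤ ξ) : ξ ≠ 0 := (omega0_pos.trans_le hξ).ne'

theorem ceilDiv_le_iff (hξ : ξ ≠ 0) : ceilDiv γ ξ ≤ q ↔ γ ≤ ξ * q :=
  ⟨fun h => (csInf_mem (s := {q | γ ≤ ξ * q}) ⟨γ, le_mul_right γ (pos_iff_ne_zero.2 hξ)⟩).trans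
    (mul_le_mul_right h ξ), fun h => csInf_le' h⟩

theorem lt_ceilDiv_iff (hξ : ξ ≠ 0) : q < ceilDiv γ ξ ↔ ξ * q < γ := by
  simpa only [not_le] using (ceilDiv_le_iff hξ).not

theorem ceilDiv_mono (hξ : ξ ≠ 0) : Monotone (ceilDiv · ξ) := fun _ _ h =>
  (ceilDiv_le_iff hξ).2 (h.trans ((ceilDiv_le_iff hξ).1 le_rfl))

theorem ceilDiv_mul (hξ : ξ ≠ 0) (q : Ordinal) : ceilDiv (ξ * q) ξ = q :=
  le_antisymm ((ceilDiv_le_iff hξ).2 le_rfl) <| le_of_forall_lt fun _ hp =>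
    (lt_ceilDiv_iff hξ).2 ((mul_lt_mul_iff_right₀ (pos_iff_ne_zero.2 hξ)).2 hp)

theorem mul_add_one_add_le (hξ : ω ≤ ξ) (hr : r ≤ ξ) : ξ * q + 1 + r ≤ ξ * (q + 1) := by
  rw [add_assoc, mul_add_one]
  gcongr
  exact (add_le_add_right hr 1).trans (one_add_of_omega0_le hξ).le

theorem ceilDiv_mul_add_one_add (hξ : ω ≤ ξ) (hr : r ≤ ξ) :
    ceilDiv (ξ * q + 1 + r) ξ = q + 1 :=
  le_antisymm ((ceilDiv_le_iff (ne_zero_of_omega0_le hξ)).2 (mul_add_one_add_le hξ hr)) <|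
    Order.add_one_le_of_lt <| (lt_ceilDiv_iff (ne_zero_of_omega0_le hξ)).2 <|
      (lt_add_one _).trans_le le_self_add

theorem continuous_ceilDiv (hξ : ξ ≠ 0) : Continuous (ceilDiv · ξ) := by
  refine continuous_iff_continuousAt.2 fun a => tendsto_order.2 ⟨fun b hb => ?_, fun b hb => ?_⟩
  · filter_upwards [Ioi_mem_nhds ((lt_ceilDiv_iff hξ).1 hb)] with x hx
    exact (lt_ceilDiv_iff hξ).2 hx
  · filter_upwards [Iio_mem_nhds (Order.lt_succ a)] with x hx
    exact (ceilDiv_mono hξ (Order.lt_succ_iff.1 hx)).trans_lt hb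

theorem exists_eq_mul_add_one_add (hξ : ξ ≠ 0) (hγ : ξ * ceilDiv γ ξ ≠ γ) :
    ∃ q r, r ≤ ξ ∧ ξ * q + 1 + r = γ := by
  have hmod : γ % ξ ≠ 0 := fun h => hγ <| by
    have hdiv : ξ * (γ / ξ) = γ := by simpa [h] using div_add_mod γ ξ
    rw [← hdiv, ceilDiv_mul hξ]
  refine ⟨γ / ξ, γ % ξ - 1, (Ordinal.sub_le_self _ _).trans (mod_lt γ hξ).le, ?_⟩
  rw [add_assoc, Ordinal.add_sub_cancel_of_le (Order.one_le_iff_ne_zero.2 hmod), div_add_mod]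

section Blocks

variable {ξ ζ : Ordinal}

def mulIic (hξ : ξ ≠ 0) : C(Iic ζ, Iic (ξ * ζ)) where
  toFun q := ⟨ξ * q, mul_le_mul_right q.2 ξ⟩
  continuous_toFun := ((isNormal_mul_right (pos_iff_ne_zero.2 hξ)).continuous.comp
    continuous_subtype_val).subtype_mk _

def ceilDivIic (hξ : ξ ≠ 0) : C(Iic (ξ * ζ), Iic ζ) where
  toFun γ := ⟨ceilDiv γ ξ, (ceilDiv_le_iff hξ).2 γ.2⟩
  continuous_toFun := ((continuous_ceilDiv hξ).comp continuous_subtype_val).subtype_mk _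

/-- The `q`-th block `(ξ * q, ξ * (q + 1)]` of `[0, ξ * ζ]`, parametrised by `[0, ξ]`. -/
def blockIic (hξ : ω ≤ ξ) (q : Iio ζ) : C(Iic ξ, Iic (ξ * ζ)) where
  toFun r := ⟨ξ * q + 1 + r, (mul_add_one_add_le hξ r.2).trans
    (mul_le_mul_right (Order.add_one_le_of_lt q.2) ξ)⟩
  continuous_toFun := ((isNormal_add_right _).continuous.comp continuous_subtype_val).subtype_mk _

theorem ceilDivIic_mulIic (hξ : ξ ≠ 0) (z : Iic ζ) : ceilDivIic hξ (mulIic hξ z) = z :=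
  Subtype.ext (ceilDiv_mul hξ z)

variable (hξ : ω ≤ ξ)
include hξ

theorem blockIic_top (q : Iio ζ) :
    blockIic hξ q ⟨ξ, self_mem_Iic⟩ =
      mulIic (ne_zero_of_omega0_le hξ) ⟨q + 1, mem_Iic.2 (Order.add_one_le_of_lt q.2)⟩ :=
  Subtype.ext <| by
    simp only [blockIic, mulIic, ContinuousMap.coe_mk]
    rw [add_assoc, one_add_of_omega0_le hξ, mul_add_one]

theorem blockIic_injective (q : Iio ζ) : Injective (blockIic hξ q) := fun _ _ h =>
  Subtype.ext (add_left_cancel (congrArg Subtype.val h))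

theorem range_blockIic (q : Iio ζ) :
    range (blockIic hξ q) = {γ | ceilDiv γ.1 ξ = q.1 + 1} := by
  ext γ
  refine ⟨?_, fun hγ => ?_⟩
  · rintro ⟨r, rfl⟩
    exact ceilDiv_mul_add_one_add hξ r.2
  by_cases hmul : ξ * ceilDiv γ.1 ξ = γ.1
  · refine ⟨⟨ξ, self_mem_Iic⟩, ?_⟩
    rw [blockIic_top]
    exact Subtype.ext (by simp only [mulIic, ContinuousMap.coe_mk, ← hγ.out, hmul])
  · obtain ⟨p, r, hr, hpr⟩ := exists_eq_mul_add_one_add (ne_zero_of_omega0_le hξ) hmul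
    have hpq : p = q := by
      have h := ceilDiv_mul_add_one_add (q := p) hξ hr
      rw [hpr, hγ.out] at h
      exact (Order.add_one_inj.1 h).symm
    exact ⟨⟨r, hr⟩, Subtype.ext (by simpa [blockIic, ← hpq] using hpr)⟩

theorem isOpen_range_blockIic (q : Iio ζ) : IsOpen (range (blockIic hξ q)) := by
  rw [range_blockIic]
  exact (SuccOrder.isOpen_singleton_iff.2 (Order.not_isSuccLimit_succ q.1)).preimage
    ((continuous_ceilDiv (ne_zero_of_omega0_le hξ)).comp continuous_subtype_val)

theorem pairwise_disjoint_range_blockIic :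
    Pairwise (Disjoint on fun q : Iio ζ => range (blockIic hξ q)) := fun q q' hqq' => by
  simp only [onFun, range_blockIic]
  exact disjoint_left.2 fun γ hγ hγ' =>
    hqq' (Subtype.ext (Order.add_one_inj.1 (hγ.out.symm.trans hγ'.out)))

theorem isClosedEmbedding_blockIic (q : Iio ζ) : IsClosedEmbedding (blockIic hξ q) :=
  (blockIic hξ q).continuous.isClosedEmbedding (blockIic_injective hξ q)

theorem mulIic_ceilDivIic_of_forall_notMem {γ : Iic (ξ * ζ)}
    (hγ : ∀ q, γ ∉ range (blockIic hξ q)) :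
    mulIic (ne_zero_of_omega0_le hξ) (ceilDivIic (ne_zero_of_omega0_le hξ) γ) = γ := by
  have hξ0 := ne_zero_of_omega0_le hξ
  by_contra hne
  obtain ⟨p, r, hr, hpr⟩ := exists_eq_mul_add_one_add hξ0 fun h => hne (Subtype.ext h)
  have hp : p < ζ := (mul_lt_mul_iff_right₀ (pos_iff_ne_zero.2 hξ0)).1 <|
    ((lt_add_one _).trans_le le_self_add).trans_le (hpr.trans_le γ.2)
  exact hγ ⟨p, hp⟩ ⟨⟨r, hr⟩, Subtype.ext hpr⟩

theorem mulIic_eq_blockIic_top {z : Iic ζ} {q : Iio ζ}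
    (h : mulIic (ne_zero_of_omega0_le hξ) z ∈ range (blockIic hξ q)) :
    mulIic (ne_zero_of_omega0_le hξ) z = blockIic hξ q ⟨ξ, self_mem_Iic⟩ := by
  rw [range_blockIic, mem_ofPred, mulIic, ContinuousMap.coe_mk,
    ceilDiv_mul (ne_zero_of_omega0_le hξ)] at h
  rw [blockIic_top]
  exact congrArg _ (Subtype.ext h)

end Blocks

end Ordinal

section BlockDecomposition

variable {ξ ζ : Ordinal}

/-- On the `q`-th block, `f` minus its value `f (ξ * (q + 1))` at the right end of the block. -/
def blockDefect (hξ : ξ ≠ 0) (f : C(Iic (ξ * ζ), ℝ)) : C(Iic (ξ * ζ), ℝ) :=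
  f - f.comp ((mulIic hξ).comp (ceilDivIic hξ))

theorem blockDefect_mulIic (hξ : ξ ≠ 0) (f : C(Iic (ξ * ζ), ℝ)) (z : Iic ζ) :
    blockDefect hξ f (mulIic hξ z) = 0 := by
  simp [blockDefect, ceilDivIic_mulIic]

theorem norm_blockDefect_le (hξ : ξ ≠ 0) (f : C(Iic (ξ * ζ), ℝ)) :
    ‖blockDefect hξ f‖ ≤ 2 * ‖f‖ :=
  (norm_sub_le _ _).trans <| by
    rw [two_mul]
    exact add_le_add_right (ContinuousMap.norm_comp_le f _) _

variable (hξ : ω ≤ ξ)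
include hξ

theorem support_blockDefect_subset (f : C(Iic (ξ * ζ), ℝ)) :
    support (blockDefect (ne_zero_of_omega0_le hξ) f) ⊆ ⋃ q, range (blockIic hξ q) := by
  intro γ hγ
  by_contra hnot
  refine hγ ?_
  rw [← mulIic_ceilDivIic_of_forall_notMem hξ fun q hq => hnot (mem_iUnion.2 ⟨q, hq⟩)]
  exact blockDefect_mulIic _ f _

theorem glueBlocks_mulIic {h : Iio ζ → Iic ξ → ℝ} (hh : ∀ q, h q ⟨ξ, self_mem_Iic⟩ = 0)
    (z : Iic ζ) :
    glueBlocks (fun q => blockIic hξ q) h (mulIic (ne_zero_of_omega0_le hξ) z) = 0 := by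
  by_cases hz : ∃ q, mulIic (ne_zero_of_omega0_le hξ) z ∈ range (blockIic hξ q)
  · obtain ⟨q, hq⟩ := hz
    rw [mulIic_eq_blockIic_top hξ hq,
      glueBlocks_apply (pairwise_disjoint_range_blockIic hξ) (blockIic_injective hξ)]
    exact hh q
  · exact glueBlocks_eq_zero _ fun q hq => hz ⟨q, hq⟩

def blockPart (f : Czero (ξ * ζ)) (q : Iio ζ) : Czero ξ :=
  ⟨(blockDefect (ne_zero_of_omega0_le hξ) f.1).comp (blockIic hξ q), by
    change blockDefect _ f.1 (blockIic hξ q ⟨ξ, self_mem_Iic⟩) = 0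
    rw [blockIic_top]
    exact blockDefect_mulIic _ _ _⟩

theorem norm_blockPart_le (f : Czero (ξ * ζ)) (q : Iio ζ) : ‖blockPart hξ f q‖ ≤ 2 * ‖f‖ :=
  (ContinuousMap.norm_comp_le _ _).trans (norm_blockDefect_le _ _)

def blockParts (f : Czero (ξ * ζ)) : czero (Iio ζ) (Czero ξ) :=
  ⟨⟨blockPart hξ f, memℓp_infty ⟨2 * ‖f‖, by
    rintro _ ⟨q, rfl⟩
    exact norm_blockPart_le hξ f q⟩⟩, fun ε hε =>
    (finite_setOf_lt_norm_comp (pairwise_disjoint_range_blockIic hξ) (isOpen_range_blockIic hξ)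
      (blockDefect _ f.1).continuous (support_blockDefect_subset hξ f.1) hε).subset
      fun _ hq => ContinuousMap.exists_lt_norm_apply hε.le hq⟩

def blockDecomp : Czero (ξ * ζ) →ₗ[ℝ] Czero ζ × czero (Iio ζ) (Czero ξ) where
  toFun f := (⟨f.1.comp (mulIic (ne_zero_of_omega0_le hξ)), f.2⟩, blockParts hξ f)
  map_add' f g := by
    ext q r
    · rfl
    · simp only [Prod.snd_add, blockParts]
      rw [Submodule.coe_add, lp.coeFn_add, Pi.add_apply, Submodule.coe_add,
        ContinuousMap.add_apply]
      simp only [blockPart, blockDefect, ContinuousMap.comp_apply, ContinuousMap.sub_apply,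
        Submodule.coe_add, ContinuousMap.add_apply]
      ring
  map_smul' c f := by
    ext q r
    · rfl
    · simp only [Prod.smul_snd, blockParts]
      rw [Submodule.coe_smul, lp.coeFn_smul, Pi.smul_apply, Submodule.coe_smul,
        ContinuousMap.smul_apply]
      simp only [blockPart, blockDefect, ContinuousMap.comp_apply, ContinuousMap.sub_apply,
        Submodule.coe_smul, ContinuousMap.smul_apply, RingHom.id_apply]
      ring

theorem norm_blockDecomp_le (f : Czero (ξ * ζ)) : ‖blockDecomp hξ f‖ ≤ 2 * ‖f‖ :=
  max_le ((ContinuousMap.norm_comp_le f.1 _).trans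
      (le_mul_of_one_le_left (norm_nonneg f) one_le_two))
    (lp.norm_le_of_forall_le (by positivity) (norm_blockPart_le hξ f))

def ofBlocksFun (p : Czero ζ × czero (Iio ζ) (Czero ξ)) (γ : Iic (ξ * ζ)) : ℝ :=
  p.1.1 (ceilDivIic (ne_zero_of_omega0_le hξ) γ) +
    glueBlocks (fun q => blockIic hξ q) (fun q => (p.2.1 q).1) γ

theorem ofBlocksFun_mulIic (p : Czero ζ × czero (Iio ζ) (Czero ξ)) (z : Iic ζ) :
    ofBlocksFun hξ p (mulIic (ne_zero_of_omega0_le hξ) z) = p.1.1 z := by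
  rw [ofBlocksFun, ceilDivIic_mulIic, glueBlocks_mulIic hξ (fun q => (p.2.1 q).2), add_zero]

theorem continuous_ofBlocksFun (p : Czero ζ × czero (Iio ζ) (Czero ξ)) :
    Continuous (ofBlocksFun hξ p) :=
  (p.1.1.continuous.comp (ceilDivIic _).continuous).add <|
    continuous_glueBlocks (isClosedEmbedding_blockIic hξ) (isOpen_range_blockIic hξ)
      (pairwise_disjoint_range_blockIic hξ) (fun q => (p.2.1 q).1.continuous) fun ε hε =>
      (p.2.2 ε hε).subset fun _ ⟨y, hy⟩ => hy.trans_le ((p.2.1 _).1.norm_coe_le_norm y)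

def ofBlocks (p : Czero ζ × czero (Iio ζ) (Czero ξ)) : Czero (ξ * ζ) :=
  ⟨⟨ofBlocksFun hξ p, continuous_ofBlocksFun hξ p⟩,
    (ofBlocksFun_mulIic hξ p ⟨ζ, self_mem_Iic⟩).trans p.1.2⟩

theorem norm_ofBlocks_le (p : Czero ζ × czero (Iio ζ) (Czero ξ)) :
    ‖ofBlocks hξ p‖ ≤ 2 * ‖p‖ := by
  refine (ContinuousMap.norm_le _ (by positivity)).2 fun γ => (norm_add_le _ _).trans ?_
  rw [two_mul]
  refine add_le_add ((p.1.1.norm_coe_le_norm _).trans (norm_fst_le p)) <|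
    norm_glueBlocks_le (pairwise_disjoint_range_blockIic hξ) (blockIic_injective hξ) _
      (norm_nonneg p) (fun q y => ?_) γ
  exact ((p.2.1 q).1.norm_coe_le_norm y).trans <|
    (lp.norm_apply_le_norm ENNReal.top_ne_zero p.2.1 q).trans (norm_snd_le p)

def blockLinearEquiv : Czero (ξ * ζ) ≃ₗ[ℝ] Czero ζ × czero (Iio ζ) (Czero ξ) where
  __ := blockDecomp hξ
  invFun := ofBlocks hξ
  left_inv f := by
    ext γ
    change f.1 (mulIic _ (ceilDivIic _ γ)) + glueBlocks (fun q => blockIic hξ q)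
      (fun q => blockDefect _ f.1 ∘ blockIic hξ q) γ = f.1 γ
    rw [glueBlocks_comp (pairwise_disjoint_range_blockIic hξ)
      (blockIic_injective hξ) (support_blockDefect_subset hξ f.1)]
    exact add_sub_cancel _ _
  right_inv p := by
    ext q r
    · exact ofBlocksFun_mulIic hξ p q
    · change ofBlocksFun hξ p (blockIic hξ q r) -
        ofBlocksFun hξ p (mulIic (ne_zero_of_omega0_le hξ)
          (ceilDivIic (ne_zero_of_omega0_le hξ) (blockIic hξ q r))) = (p.2.1 q).1 r
      rw [ofBlocksFun_mulIic, ofBlocksFun, glueBlocks_apply (pairwise_disjoint_range_blockIic hξ)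
        (blockIic_injective hξ), add_sub_cancel_left]

end BlockDecomposition

theorem statement1_general (ξ ζ : Ordinal) (hξ : ω ≤ ξ) :
    Nonempty (Czero (ξ * ζ) ≃L[ℝ] (Czero ζ × czero (Set.Iio ζ) (Czero ξ))) := by
  refine ⟨(blockLinearEquiv hξ).toContinuousLinearEquivOfBounds 2 2 (fun f => ?_) (fun p => ?_)⟩
  · exact norm_blockDecomp_le hξ f
  · exact norm_ofBlocks_le hξ p

theorem statement1 (ξ ζ : Ordinal) (hζ : 0 < ζ) (hζξ : ζ ≤ ξ) (hξ : ω ≤ ξ) :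
    Nonempty (Czero (ξ * ζ) ≃L[ℝ] (Czero ζ × czero (Set.Iio ζ) (Czero ξ))) :=
  statement1_general ξ ζ hξ
end
end

section
/- For every infinite ordinal α, the Banach space C₀([0, α]) of continuous functions on [0, α] vanishing at α is isomorphic (linearly homeomorphic) to C([0, α]). -/
set_option synthInstance.maxHeartbeats 1000000
set_option maxHeartbeats 1000000

noncomputable section

open Ordinal Set Metric

/-!
Let `t` be a homeomorphism of `K` onto the complement of an isolated point `z` with `t p = p`.
Then `f ↦ f ∘ t + f z` maps `{f ∈ C(K) | f p = 0}` isomorphically onto `C(K)`: `f ∘ t` is an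
arbitrary function vanishing at `p`, and the free value `f z` restores the lost constant. The
inverse is `g ↦ g ∘ t⁻¹ - g p • 𝟙_{K ∖ {z}}`, with `t⁻¹ z := p`. For `ω ≤ α` we have
`1 + α = α`, so `x ↦ 1 + x` is such a homeomorphism of `[0, α]` onto `[1, α]`, with `z = 0`
and `p = α`.
-/

namespace ContinuousMap

variable {K : Type*} [TopologicalSpace K] {p z : K} {t s : C(K, K)}

def kerEvalEquivOfShift (hz : IsClopen {z}) (ht : ∀ x, t x ≠ z) (hst : ∀ x, s (t x) = x)
    (hts : ∀ x, x ≠ z → t (s x) = x) (htp : t p = p) (hsz : s z = p) :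
    LinearMap.ker (evalCLM ℝ p : C(K, ℝ) →L[ℝ] ℝ).toLinearMap ≃L[ℝ] C(K, ℝ) :=
  let χ : C(K, ℝ) := (1 : LocallyConstant K ℝ).indicator hz.compl
  have hχz : χ z = 0 := LocallyConstant.indicator_of_notMem _ hz.compl (by simp)
  have hχ : ∀ x, x ≠ z → χ x = 1 := fun x hx => LocallyConstant.indicator_of_mem _ hz.compl hx
  have hsp : s p = p := by simpa [htp] using hst p
  ContinuousLinearEquiv.equivOfInverse
    ((compCLM ℝ ℝ t + (evalCLM ℝ z).smulRight 1) ∘L Submodule.subtypeL _)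
    ((compCLM ℝ ℝ s - (evalCLM ℝ p).smulRight χ).codRestrict _ fun g => by
      simp [hsp, hχ p (htp ▸ ht p)])
    (fun f => by
      have hfp : (f : C(K, ℝ)) p = 0 := f.2
      ext x
      by_cases hx : x = z
      · simp [hx, hsz, htp, hfp, hχz]
      · simp [hts x hx, htp, hfp, hχ x hx])
    (fun g => by
      ext x
      simp [hst, hsz, hχz, hχ _ (ht x)])

end ContinuousMap

namespace Ordinal

variable {α : Ordinal}

def oneAddOrderIso (hα : 1 + α = α) : Iic α ≃o Icc 1 α :=
  StrictMono.orderIsoOfSurjective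
    (fun x => ⟨1 + x, le_self_add, (add_le_add_right x.2 1).trans_eq hα⟩)
    (fun a b (h : a.1 < b.1) => (add_lt_add_iff_left 1).2 h)
    (fun y => ⟨⟨y - 1, (sub_le_self _ _).trans y.2.2⟩,
      Subtype.ext (Ordinal.add_sub_cancel_of_le y.2.1)⟩)

@[simp]
theorem coe_oneAddOrderIso (hα : 1 + α = α) (x : Iic α) :
    (oneAddOrderIso hα x : Ordinal) = 1 + x :=
  rfl

theorem isClopen_singleton_bot : IsClopen ({⊥} : Set (Iic α)) := by
  refine ⟨isClosed_singleton, ?_⟩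
  have : IsOpen ({0} : Set Ordinal) := SuccOrder.isOpen_singleton_iff.2 not_isSuccLimit_zero
  convert this.preimage continuous_subtype_val
  ext x; simp [Subtype.ext_iff]

theorem one_le_of_one_add_eq (hα : 1 + α = α) : 1 ≤ α := hα ▸ le_self_add

def shiftIic (hα : 1 + α = α) : C(Iic α, Iic α) :=
  ⟨fun x => inclusion Icc_subset_Iic_self (oneAddOrderIso hα x),
    continuous_inclusion Icc_subset_Iic_self |>.comp (oneAddOrderIso hα).continuous⟩

def unshiftIic (hα : 1 + α = α) : C(Iic α, Iic α) :=
  ⟨({⊥} : Set (Iic α)).piecewise (fun _ => ⊤)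
      fun x => (oneAddOrderIso hα).symm (projIcc 1 α (one_le_of_one_add_eq hα) x),
    continuous_const.piecewise (by simp [isClopen_singleton_bot.frontier_eq])
      ((oneAddOrderIso hα).symm.continuous.comp
        (continuous_projIcc.comp continuous_subtype_val))⟩

variable (hα : 1 + α = α)

theorem shiftIic_ne_bot (x : Iic α) : shiftIic hα x ≠ ⊥ := by
  simp [shiftIic]

theorem unshiftIic_bot : unshiftIic hα ⊥ = ⊤ := by
  simp [unshiftIic]

theorem unshiftIic_of_ne_bot {x : Iic α} (hx : x ≠ ⊥) :
    unshiftIic hα x = (oneAddOrderIso hα).symm (projIcc 1 α (one_le_of_one_add_eq hα) x) := by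
  simp [unshiftIic, hx]

theorem unshiftIic_shiftIic (x : Iic α) : unshiftIic hα (shiftIic hα x) = x := by
  rw [unshiftIic_of_ne_bot hα (shiftIic_ne_bot hα x)]
  exact congrArg (oneAddOrderIso hα).symm (projIcc_val _ _) |>.trans
    ((oneAddOrderIso hα).symm_apply_apply x)

theorem shiftIic_unshiftIic {x : Iic α} (hx : x ≠ ⊥) : shiftIic hα (unshiftIic hα x) = x := by
  have hx1 : 1 ≤ (x : Ordinal) :=
    Order.one_le_iff_ne_zero.2 (by simpa [← Subtype.coe_ne_coe] using hx)
  rw [unshiftIic_of_ne_bot hα hx]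
  ext
  simp [shiftIic, projIcc_of_mem _ ⟨hx1, x.2⟩]

theorem shiftIic_top : shiftIic hα ⊤ = ⊤ :=
  Subtype.ext hα

def czeroEquiv : Czero α ≃L[ℝ] C(Iic α, ℝ) :=
  (ContinuousLinearEquiv.ofEq _ _ rfl).trans <|
    ContinuousMap.kerEvalEquivOfShift isClopen_singleton_bot (shiftIic_ne_bot hα)
      (unshiftIic_shiftIic hα) (fun _ => shiftIic_unshiftIic hα) (shiftIic_top hα)
      (unshiftIic_bot hα)

end Ordinal

theorem statement5 (α : Ordinal) (hα : ω ≤ α) :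
    Nonempty (Czero α ≃L[ℝ] C(Set.Iic α, ℝ)) :=
  ⟨Ordinal.czeroEquiv (one_add_of_omega0_le hα)⟩
end
end

section
/- Let X be an Asplund space. If there exist an ordinal γ and ε > 0 such that Sz(X, ε) > ω^γ, then Sz(X) ≥ ω^{γ+1}. Consequently, Sz(X) = ω^α for some ordinal α. -/
set_option synthInstance.maxHeartbeats 1000000
set_option maxHeartbeats 1000000

noncomputable section

open Ordinal Set Metric

/-! The Szlenk derivation commutes with the dilations `z ↦ y + c • z` up to rescaling `ε`
by `c`. If `x₀` survives `β` derivations of the dual ball, then by convexity the whole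
half-size ball centred at `x₀ / 2` survives `β` derivations at `ε / 2`; rescaling once more,
a copy of the `β * n`-th derived set at `ε / 2 ^ n` sits inside it, so `β * (n + 1)`
derivations at `ε / 2 ^ (n + 1)` leave the ball nonempty. Hence `β < Sz(X, ε)` forces
`β * ω ≤ Sz(X)`, and an ordinal closed under `β ↦ β * ω` is a power of `ω`. -/

namespace Ordinal

theorem exists_eq_omega0_opow_of_forall_mul_omega0_le {o : Ordinal} (ho : o ≠ 0)
    (h : ∀ β < o, β * ω ≤ o) : ∃ a : Ordinal, o = ω ^ a := by
  refine ⟨log ω o, (opow_log_le_self ω ho).antisymm' (not_lt.1 fun hlt => ?_)⟩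
  have hsucc : ω ^ Order.succ (log ω o) ≤ o := by rw [opow_succ]; exact h _ hlt
  exact (lt_opow_succ_log_self one_lt_omega0 o).not_ge hsucc

theorem mul_omega0_le_of_forall_natCast {β o : Ordinal} (h : ∀ n : ℕ, β * n ≤ o) :
    β * ω ≤ o := by
  refine (mul_le_iff_of_isSuccLimit isSuccLimit_omega0).2 fun b hb => ?_
  obtain ⟨n, rfl⟩ := lt_omega0.1 hb
  exact h n

end Ordinal

section Dilation

variable {E : Type*} [NormedAddCommGroup E] [NormedSpace ℝ E]

theorem diam_image_add_smul (y : E) {c : ℝ} (hc : 0 ≤ c) (S : Set E) :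
    diam ((fun z => y + c • z) '' S) = c * diam S := by
  rw [← Set.image_image (fun z => y + z) (fun z => c • z), (isometry_add_left y).diam_image,
    Set.image_smul, diam_smul₀, Real.norm_of_nonneg hc]

theorem bijective_add_smul (y : E) {c : ℝ} (hc : c ≠ 0) :
    Function.Bijective fun z : E => y + c • z :=
  ⟨fun _ _ h => smul_right_injective E hc (add_left_cancel h),
    fun z => ⟨c⁻¹ • (z - y), by simp [smul_smul, mul_inv_cancel₀ hc]⟩⟩

end Dilation

section SzlenkDerivation

variable {X : Type*} [NormedAddCommGroup X] [NormedSpace ℝ X]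

theorem szIter_zero (ε : ℝ) (B : Set (StrongDual ℝ X)) : szIter X ε B 0 = B :=
  Ordinal.limitRecOn_zero _ _ _

theorem szIter_add_one (ε : ℝ) (B : Set (StrongDual ℝ X)) (β : Ordinal) :
    szIter X ε B (β + 1) = szDeriv X ε (szIter X ε B β) :=
  Ordinal.limitRecOn_add_one _ _ _ _

theorem szIter_of_isSuccLimit (ε : ℝ) (B : Set (StrongDual ℝ X)) {β : Ordinal}
    (hβ : Order.IsSuccLimit β) : szIter X ε B β = ⋂ σ < β, szIter X ε B σ :=
  Ordinal.limitRecOn_limit _ _ _ _ hβ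

theorem szDeriv_subset (ε : ℝ) (B : Set (StrongDual ℝ X)) : szDeriv X ε B ⊆ B :=
  fun _ hx => hx.1

theorem szDeriv_mono {ε ε' : ℝ} {A B : Set (StrongDual ℝ X)} (hB : Bornology.IsBounded B)
    (hAB : A ⊆ B) (hε : ε' ≤ ε) : szDeriv X ε A ⊆ szDeriv X ε' B := by
  rintro x ⟨hxA, hx⟩
  refine ⟨hAB hxA, fun V hV hxV => ?_⟩
  calc ε' ≤ ε := hε
    _ < diam (A ∩ V) := hx V hV hxV
    _ ≤ diam (B ∩ V) :=
      diam_mono (Set.inter_subset_inter_left _ hAB) (hB.subset Set.inter_subset_left)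

theorem szIter_subset (ε : ℝ) (B : Set (StrongDual ℝ X)) (β : Ordinal) :
    szIter X ε B β ⊆ B := by
  induction β using Ordinal.limitRecOn with
  | zero => rw [szIter_zero]
  | add_one β ih => rw [szIter_add_one]; exact (szDeriv_subset _ _).trans ih
  | limit β hβ _ =>
    rw [szIter_of_isSuccLimit _ _ hβ]
    exact (Set.iInter₂_subset 0 hβ.pos).trans (szIter_zero ε B).subset

theorem szIter_mono {ε ε' : ℝ} {A B : Set (StrongDual ℝ X)} (hB : Bornology.IsBounded B)
    (hAB : A ⊆ B) (hε : ε' ≤ ε) (β : Ordinal) : szIter X ε A β ⊆ szIter X ε' B β := by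
  induction β using Ordinal.limitRecOn with
  | zero => rwa [szIter_zero, szIter_zero]
  | add_one β ih =>
    rw [szIter_add_one, szIter_add_one]
    exact szDeriv_mono (hB.subset (szIter_subset _ _ _)) ih hε
  | limit β hβ ih =>
    rw [szIter_of_isSuccLimit _ _ hβ, szIter_of_isSuccLimit _ _ hβ]
    exact Set.iInter₂_mono ih

theorem szIter_antitone (ε : ℝ) (B : Set (StrongDual ℝ X)) : Antitone (szIter X ε B) := by
  intro β' β hle
  induction β using Ordinal.limitRecOn with
  | zero => rw [nonpos_iff_eq_zero.1 hle]
  | add_one β ih =>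
    rcases hle.eq_or_lt with rfl | hlt
    · rfl
    · rw [szIter_add_one]
      exact (szDeriv_subset _ _).trans (ih (Order.lt_add_one_iff.1 hlt))
  | limit β hβ _ =>
    rcases hle.eq_or_lt with rfl | hlt
    · rfl
    · rw [szIter_of_isSuccLimit _ _ hβ]
      exact Set.iInter₂_subset (κ := fun σ => σ < β) _ hlt

theorem szIter_add (ε : ℝ) (B : Set (StrongDual ℝ X)) (α β : Ordinal) :
    szIter X ε B (α + β) = szIter X ε (szIter X ε B α) β := by
  induction β using Ordinal.limitRecOn with
  | zero => rw [add_zero, szIter_zero]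
  | add_one β ih => rw [← add_assoc, szIter_add_one, szIter_add_one, ih]
  | limit β hβ ih =>
    rw [szIter_of_isSuccLimit _ _ (Ordinal.isSuccLimit_add α hβ),
      szIter_of_isSuccLimit _ _ hβ]
    have hsub : ⋂ σ < α + β, szIter X ε B σ ⊆ ⋂ τ < β, szIter X ε (szIter X ε B α) τ :=
      Set.iInter₂_mono' fun τ hτ => ⟨α + τ, add_lt_add_right hτ α, (ih τ hτ).subset⟩
    refine hsub.antisymm (Set.subset_iInter₂ fun σ hσ => ?_)
    rcases le_or_gt α σ with hασ | hσα
    · have hlt : σ - α < β := by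
        rwa [← add_lt_add_iff_left α, Ordinal.add_sub_cancel_of_le hασ]
      refine (Set.iInter₂_subset (κ := fun σ => σ < β) _ hlt).trans ?_
      rw [← ih _ hlt, Ordinal.add_sub_cancel_of_le hασ]
    · refine (Set.iInter₂_subset 0 hβ.pos).trans ?_
      rw [← ih _ hβ.pos, add_zero]
      exact szIter_antitone ε B hσα.le

theorem isWstarOpen_image_add_smul_iff (y : StrongDual ℝ X) {c : ℝ} (hc : c ≠ 0)
    {V : Set (StrongDual ℝ X)} :
    IsWstarOpen X ((fun z => y + c • z) '' V) ↔ IsWstarOpen X V := by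
  let h : WeakDual ℝ X ≃ₜ WeakDual ℝ X :=
    (Homeomorph.smulOfNeZero c hc).trans (Homeomorph.addLeft (StrongDual.toWeakDual y))
  have hcomm : StrongDual.toWeakDual '' ((fun z => y + c • z) '' V) =
      h '' (StrongDual.toWeakDual '' V) := by
    simp only [Set.image_image]
    rfl
  rw [IsWstarOpen, IsWstarOpen, hcomm, h.isOpen_image]

theorem szDeriv_image_add_smul (y : StrongDual ℝ X) {c : ℝ} (hc : 0 < c) (ε : ℝ)
    (B : Set (StrongDual ℝ X)) :
    szDeriv X (c * ε) ((fun z => y + c • z) '' B) =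
      (fun z => y + c • z) '' szDeriv X ε B := by
  set T : StrongDual ℝ X → StrongDual ℝ X := fun z => y + c • z
  have hT := bijective_add_smul y hc.ne'
  have hdiam (V : Set (StrongDual ℝ X)) : diam (T '' B ∩ T '' V) = c * diam (B ∩ V) := by
    rw [← Set.image_inter hT.1, diam_image_add_smul y hc.le]
  ext x
  constructor
  · rintro ⟨⟨a, haB, rfl⟩, hx⟩
    refine ⟨a, ⟨haB, fun V hV haV => ?_⟩, rfl⟩
    have := hx (T '' V) ((isWstarOpen_image_add_smul_iff y hc.ne').2 hV)
      (Set.mem_image_of_mem T haV)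
    rwa [hdiam, mul_lt_mul_iff_right₀ hc] at this
  · rintro ⟨a, ⟨haB, ha⟩, rfl⟩
    refine ⟨Set.mem_image_of_mem T haB, fun V hV hTaV => ?_⟩
    rw [← Set.image_preimage_eq V hT.2] at hV ⊢
    rw [hdiam, mul_lt_mul_iff_right₀ hc]
    exact ha _ ((isWstarOpen_image_add_smul_iff y hc.ne').1 hV) hTaV

theorem szIter_image_add_smul (y : StrongDual ℝ X) {c : ℝ} (hc : 0 < c) (ε : ℝ)
    (B : Set (StrongDual ℝ X)) (β : Ordinal) :
    szIter X (c * ε) ((fun z => y + c • z) '' B) β =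
      (fun z => y + c • z) '' szIter X ε B β := by
  induction β using Ordinal.limitRecOn with
  | zero => rw [szIter_zero, szIter_zero]
  | add_one β ih => rw [szIter_add_one, szIter_add_one, ih, szDeriv_image_add_smul y hc]
  | limit β hβ ih =>
    rw [szIter_of_isSuccLimit _ _ hβ, szIter_of_isSuccLimit _ _ hβ,
      Set.image_iInter₂ (bijective_add_smul y hc.ne')]
    exact Set.iInter₂_congr ih

theorem image_half_add_half_subset_szIter {ε : ℝ} {B : Set (StrongDual ℝ X)}
    (hB : Bornology.IsBounded B) (hconv : Convex ℝ B) {β : Ordinal} {x₀ : StrongDual ℝ X}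
    (hx₀ : x₀ ∈ szIter X ε B β) :
    (fun z => (2⁻¹ : ℝ) • x₀ + (2⁻¹ : ℝ) • z) '' B ⊆
      szIter X (2⁻¹ * ε) B β := by
  rintro _ ⟨u, hu, rfl⟩
  have hSB : (fun z => (2⁻¹ : ℝ) • u + (2⁻¹ : ℝ) • z) '' B ⊆ B := by
    rintro _ ⟨z, hz, rfl⟩
    exact hconv hu hz (by norm_num) (by norm_num) (by norm_num)
  have hmem := szIter_mono hB hSB le_rfl β <| by
    rw [szIter_image_add_smul _ (by norm_num : (0 : ℝ) < 2⁻¹)]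
    exact Set.mem_image_of_mem _ hx₀
  rwa [add_comm] at hmem

theorem szIter_mul_natCast_nonempty {ε : ℝ} (hε : 0 ≤ ε) {B : Set (StrongDual ℝ X)}
    (hB : Bornology.IsBounded B) (hconv : Convex ℝ B) {β : Ordinal}
    (hne : (szIter X ε B β).Nonempty) (n : ℕ) :
    (szIter X (ε / 2 ^ n) B (β * n)).Nonempty := by
  obtain ⟨x₀, hx₀⟩ := hne
  set T : StrongDual ℝ X → StrongDual ℝ X :=
    fun z => (2⁻¹ : ℝ) • x₀ + (2⁻¹ : ℝ) • z
  have hTB := image_half_add_half_subset_szIter hB hconv hx₀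
  induction n with
  | zero => simpa [szIter_zero] using ⟨x₀, szIter_subset ε B β hx₀⟩
  | succ n ih =>
    obtain ⟨z, hz⟩ := ih
    have hδ : 2⁻¹ * (ε / 2 ^ n) = ε / 2 ^ (n + 1) := by ring
    have hδε : ε / 2 ^ (n + 1) ≤ 2⁻¹ * ε := by
      rw [← hδ]; gcongr; exact div_le_self hε (one_le_pow₀ one_le_two)
    have hTz : T z ∈ szIter X (ε / 2 ^ (n + 1)) (T '' B) (β * n) := by
      rw [← hδ, szIter_image_add_smul _ (by norm_num : (0 : ℝ) < 2⁻¹)]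
      exact Set.mem_image_of_mem T hz
    refine ⟨T z, ?_⟩
    rw [Nat.cast_succ, show (n : Ordinal) + 1 = 1 + n by norm_cast; omega, mul_add, mul_one,
      szIter_add]
    exact szIter_mono (hB.subset (szIter_subset _ _ _))
      (hTB.trans (szIter_mono hB subset_rfl hδε β)) le_rfl _ hTz

end SzlenkDerivation

section SzlenkIndex

variable {X : Type*} [NormedAddCommGroup X] [NormedSpace ℝ X]

theorem lt_SzE_iff (hX : SzDefined X) {ε : ℝ} (hε : 0 < ε) {β : Ordinal} :
    β < SzE X ε ↔ (szIter X ε (closedBall (0 : StrongDual ℝ X) 1) β).Nonempty := by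
  rw [Set.nonempty_iff_ne_empty, SzE]
  constructor
  · exact fun hβ hempty => hβ.not_ge (csInf_le' hempty)
  · intro hne
    have hmem := csInf_mem (hX ε hε)
    exact not_le.1 fun hle => hne (Set.subset_eq_empty (szIter_antitone ε _ hle) hmem)

theorem SzE_le_Sz {ε : ℝ} (hε : 0 < ε) : SzE X ε ≤ Sz X :=
  Ordinal.le_iSup (fun ε : {ε : ℝ // 0 < ε} => SzE X ε) ⟨ε, hε⟩

theorem Sz_ne_zero (hX : SzDefined X) : Sz X ≠ 0 := by
  have hpos : 0 < SzE X 1 := by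
    rw [lt_SzE_iff hX one_pos, szIter_zero]
    exact nonempty_closedBall.2 zero_le_one
  exact (hpos.trans_le (SzE_le_Sz one_pos)).ne'

theorem mul_omega0_le_Sz (hX : SzDefined X) {ε : ℝ} (hε : 0 < ε) {β : Ordinal}
    (hβ : β < SzE X ε) : β * ω ≤ Sz X := by
  refine Ordinal.mul_omega0_le_of_forall_natCast fun n => le_of_lt ?_
  have hne := szIter_mul_natCast_nonempty hε.le isBounded_closedBall (convex_closedBall 0 1)
    ((lt_SzE_iff hX hε).1 hβ) n
  exact ((lt_SzE_iff hX (by positivity)).2 hne).trans_le (SzE_le_Sz (by positivity))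

end SzlenkIndex

theorem statement9_general (X : Type*) [NormedAddCommGroup X] [NormedSpace ℝ X]
    (hX : SzDefined X) :
    (∀ (γ : Ordinal) (ε : ℝ), 0 < ε → ω ^ γ < SzE X ε → ω ^ (γ + 1) ≤ Sz X) ∧
    ∃ a : Ordinal, Sz X = ω ^ a := by
  refine ⟨fun γ ε hε hγ => ?_, ?_⟩
  · rw [Ordinal.opow_add_one]
    exact mul_omega0_le_Sz hX hε hγ
  · refine Ordinal.exists_eq_omega0_opow_of_forall_mul_omega0_le (Sz_ne_zero hX) fun β hβ => ?_
    obtain ⟨⟨ε, hε⟩, hβε⟩ := Ordinal.lt_iSup_iff.1 hβ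
    exact mul_omega0_le_Sz hX hε hβε

theorem statement9 (X : Type*) [NormedAddCommGroup X] [NormedSpace ℝ X] [CompleteSpace X]
    (hX : SzDefined X) :
    (∀ (γ : Ordinal) (ε : ℝ), 0 < ε → ω ^ γ < SzE X ε → ω ^ (γ + 1) ≤ Sz X) ∧
    ∃ a : Ordinal, Sz X = ω ^ a :=
  statement9_general X hX
end
end
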